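/- For a fully injective similarity scheme, given n, m ≥ 0, x_n ∈ X_n, x_m' ∈ X_m, either φ_{m+n,n}(x_n) = φ_{n+m,m}(x_m') and Γ_n(x_n) = Γ_m(x_m'), or Γ_n(x_n) ∩ Γ_m(x_m') = ∅. -/

import Mathlib

/-!
Pushing a point forward does not change its addresses: Γ_{k+1}(φ_k w) = Γ_k(w). The nontrivial
inclusion says that if φ_k(w) lies in the cell C(z₁,…,z_{k+1}) then w lies in C(z₁,…,z_k).
Writing w = π(y', ξ'), the point φ_k(w) = π(y', φ(ξ')) also equals π(z₁, u) with u in the next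
cell. Either these two representations agree, or by the quotient condition both come from X 0,
where π commutes with the embeddings; in both cases w = π(z₁, v) with φ(v) = u, and induction on k
finishes.

Hence Γ_n(x_n) and Γ_m(x'_m) are the Γ-sets of φ_{n+m,n}(x_n) and φ_{n+m,m}(x'_m), and if they
meet, full injectivity at level n + m identifies these two points.
-/

set_option linter.unusedSectionVars false
set_option linter.unusedVariables false

variable {Y : Type}

/-- Iterated embedding φ_{n,m} : X m → X n for m ≤ n. -/
def phiTo (X : ℕ → Type) (φs : ∀ n, X n → X (n + 1)) {m n : ℕ} (h : m ≤ n) (x : X m) : X n :=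
  Nat.leRecOn h (fun {k} x => φs k x) x

/-- Iterated projection π_{m,q} : Yᵐ × X q → X (q+m), the head of the word acting outermost. -/
def piFin (X : ℕ → Type) (πo : ∀ n, Y → X n → X (n + 1)) :
    ∀ (m q : ℕ), (Fin m → Y) → X q → X (q + m)
  | 0, _, _, x => x
  | m + 1, q, y, x => πo (q + m) (y 0) (piFin X πo m q (fun i => y i.succ) x)

/-- Iterated projection π_{m,0} : Yᵐ × X 0 → X m. -/
def piFin0 (X : ℕ → Type) (πo : ∀ n, Y → X n → X (n + 1)) :
    ∀ (m : ℕ), (Fin m → Y) → X 0 → X m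
  | 0, _, x => x
  | m + 1, y, x => πo m (y 0) (piFin0 X πo m (fun i => y i.succ) x)

/-- The set Γ_n(x_n) ⊂ Y^ℕ : all infinite addresses y such that for every p ≥ n the point
φ_{p,n}(x_n) lies in the cell C(y₁,…,y_p) = π_{p,0}({(y₁,…,y_p)} × X 0). -/
def Gamma (X : ℕ → Type) (φs : ∀ n, X n → X (n + 1)) (πo : ∀ n, Y → X n → X (n + 1))
    (n : ℕ) (xn : X n) : Set (ℕ → Y) :=
  { y | ∀ p, ∀ h : n ≤ p, ∃ x0 : X 0, phiTo X φs h xn = piFin0 X πo p (fun i : Fin p => y i.1) x0 }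

/-- The relation R on Y^ℕ: related iff equal or both in some Γ_n(x_n). -/
def simRel (X : ℕ → Type) (φs : ∀ n, X n → X (n + 1)) (πo : ∀ n, Y → X n → X (n + 1)) :
    (ℕ → Y) → (ℕ → Y) → Prop :=
  fun a b => a = b ∨ ∃ n, ∃ xn : X n, a ∈ Gamma X φs πo n xn ∧ b ∈ Gamma X φs πo n xn

section SimilarityScheme

variable {X : ℕ → Type} (φs : ∀ n, X n → X (n + 1)) (πo : ∀ n, Y → X n → X (n + 1))

lemma phiTo_self {n : ℕ} (h : n ≤ n) (x : X n) : phiTo X φs h x = x :=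
  Nat.leRecOn_self x

lemma phiTo_succ {m p : ℕ} (h : m ≤ p) (h' : m ≤ p + 1) (x : X m) :
    phiTo X φs h' x = φs p (phiTo X φs h x) :=
  Nat.leRecOn_succ h x

lemma phiTo_phiTo {m n p : ℕ} (h₁ : m ≤ n) (h₂ : n ≤ p) (h₃ : m ≤ p) (x : X m) :
    phiTo X φs h₂ (phiTo X φs h₁ x) = phiTo X φs h₃ x :=
  (Nat.leRecOn_trans h₁ h₂ x).symm

lemma phiTo_map {k p : ℕ} (h : k + 1 ≤ p) (h' : k ≤ p) (w : X k) :
    phiTo X φs h (φs k w) = phiTo X φs h' w := by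
  rw [← phiTo_phiTo φs (Nat.le_succ k) h h', phiTo_succ φs le_rfl, phiTo_self]

lemma πo_phiTo
    (hcomm : ∀ (n : ℕ) (y : Y) (x : X n), πo (n + 1) y (φs n x) = φs (n + 1) (πo n y x))
    {m p : ℕ} (h : m ≤ p) (y : Y) (x : X m) :
    πo p y (phiTo X φs h x) = phiTo X φs (Nat.succ_le_succ h) (πo m y x) := by
  induction p, h using Nat.le_induction with
  | base => rw [phiTo_self, phiTo_self]
  | succ p hp ih => rw [phiTo_succ φs hp, hcomm, ih, phiTo_succ φs (Nat.succ_le_succ hp)]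

def cell (p : ℕ) (z : ℕ → Y) : Set (X p) :=
  Set.range (piFin0 X πo p fun i => z i)

lemma cell_succ (p : ℕ) (z : ℕ → Y) :
    cell πo (p + 1) z = πo p (z 0) '' cell πo p (fun k => z (k + 1)) := by
  ext x
  simp only [cell, piFin0, Set.mem_range, Set.mem_image, exists_exists_eq_and, Fin.val_zero,
    Fin.val_succ]

lemma mem_Gamma_iff {n : ℕ} (xn : X n) (z : ℕ → Y) :
    z ∈ Gamma X φs πo n xn ↔ ∀ p (h : n ≤ p), phiTo X φs h xn ∈ cell πo p z := by
  simp only [Gamma, cell, Set.mem_ofPred_eq, Set.mem_range, eq_comm]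

section Lifting

variable (hφi : ∀ n, Function.Injective (φs n))
    (hπs : ∀ n, Function.Surjective fun p : Y × X n => πo n p.1 p.2)
    (hcomm : ∀ (n : ℕ) (y : Y) (x : X n), πo (n + 1) y (φs n x) = φs (n + 1) (πo n y x))
    (hquot : ∀ (n : ℕ) (y y' : Y) (ξ ξ' : X n), πo n y ξ = πo n y' ξ' → (y, ξ) ≠ (y', ξ') →
      ∃ x0 x0' : X 0, ξ = phiTo X φs (Nat.zero_le n) x0 ∧ ξ' = phiTo X φs (Nat.zero_le n) x0' ∧
        πo 0 y x0 = πo 0 y' x0')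

include hφi hπs hcomm hquot

lemma exists_eq_πo_of_map_eq_πo
    {p : ℕ} {w : X (p + 1)} {y : Y} {u : X (p + 1)} (h : φs (p + 1) w = πo (p + 1) y u) :
    ∃ v, w = πo p y v ∧ φs p v = u := by
  obtain ⟨⟨y', ξ'⟩, rfl⟩ := hπs p w
  dsimp only at h ⊢
  rw [← hcomm] at h
  by_cases hsame : (y', φs p ξ') = (y, u)
  · obtain ⟨rfl, rfl⟩ := Prod.mk.inj hsame
    exact ⟨ξ', rfl, rfl⟩
  obtain ⟨b, a, hξ', rfl, hab⟩ := hquot (p + 1) y' y (φs p ξ') u h hsame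
  have hξ'b : ξ' = phiTo X φs (Nat.zero_le p) b := by
    apply hφi p
    rw [hξ', phiTo_succ φs (Nat.zero_le p)]
  refine ⟨phiTo X φs (Nat.zero_le p) a, ?_, (phiTo_succ φs _ _ a).symm⟩
  rw [hξ'b, πo_phiTo φs πo hcomm, πo_phiTo φs πo hcomm, hab]

lemma mem_cell_of_map_mem_cell
    {p : ℕ} {w : X p} {z : ℕ → Y} (h : φs p w ∈ cell πo (p + 1) z) : w ∈ cell πo p z := by
  induction p generalizing z with
  | zero => exact ⟨w, rfl⟩
  | succ p ih =>
    rw [cell_succ] at h ⊢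
    obtain ⟨u, hu, hwu⟩ := h
    obtain ⟨v, rfl, rfl⟩ := exists_eq_πo_of_map_eq_πo φs πo hφi hπs hcomm hquot hwu.symm
    exact ⟨v, ih hu, rfl⟩

lemma Gamma_map (k : ℕ) (w : X k) :
    Gamma X φs πo (k + 1) (φs k w) = Gamma X φs πo k w := by
  ext z
  simp only [mem_Gamma_iff]
  constructor
  · intro hz p hp
    rcases hp.eq_or_lt with rfl | hlt
    · have hk := hz (k + 1) le_rfl
      rw [phiTo_self] at hk ⊢
      exact mem_cell_of_map_mem_cell φs πo hφi hπs hcomm hquot hk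
    · rw [← phiTo_map φs hlt hp]
      exact hz p hlt
  · intro hz p hp
    rw [phiTo_map φs hp (Nat.le_of_succ_le hp)]
    exact hz p _

lemma Gamma_phiTo {n p : ℕ} (h : n ≤ p) (xn : X n) :
    Gamma X φs πo p (phiTo X φs h xn) = Gamma X φs πo n xn := by
  induction p, h using Nat.le_induction with
  | base => rw [phiTo_self]
  | succ p hp ih => rw [phiTo_succ φs hp, Gamma_map φs πo hφi hπs hcomm hquot, ih]

end Lifting

end SimilarityScheme

variable {X : ℕ → Type}
  [TopologicalSpace Y] [CompactSpace Y] [T2Space Y]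
  [∀ n, TopologicalSpace (X n)] [∀ n, CompactSpace (X n)] [∀ n, T2Space (X n)]

theorem statement_14
    (φs : ∀ n, X n → X (n + 1)) (πo : ∀ n, Y → X n → X (n + 1))
    (hφi : ∀ n, Function.Injective (φs n))
    (hπs : ∀ n, Function.Surjective fun p : Y × X n => πo n p.1 p.2)
    (hcomm : ∀ (n : ℕ) (y : Y) (x : X n), πo (n + 1) y (φs n x) = φs (n + 1) (πo n y x))
    (hquot : ∀ (n : ℕ) (y y' : Y) (ξ ξ' : X n), πo n y ξ = πo n y' ξ' → (y, ξ) ≠ (y', ξ') →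
      ∃ x0 x0' : X 0, ξ = phiTo X φs (Nat.zero_le n) x0 ∧ ξ' = phiTo X φs (Nat.zero_le n) x0' ∧
        πo 0 y x0 = πo 0 y' x0')
    (hfull : ∀ (p : ℕ) (xp xp' : X p) (y : ℕ → Y),
      y ∈ Gamma X φs πo p xp → y ∈ Gamma X φs πo p xp' → xp = xp')
    (n m : ℕ) (xn : X n) (xm : X m) :
    (phiTo X φs (show n ≤ n + m by omega) xn = phiTo X φs (show m ≤ n + m by omega) xm ∧
      Gamma X φs πo n xn = Gamma X φs πo m xm) ∨
    Gamma X φs πo n xn ∩ Gamma X φs πo m xm = ∅ := by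
  rw [or_iff_not_imp_right, ← ne_eq, ← Set.nonempty_iff_ne_empty]
  rintro ⟨z, hzn, hzm⟩
  have hn : n ≤ n + m := by omega
  have hm : m ≤ n + m := by omega
  have hΓn := Gamma_phiTo φs πo hφi hπs hcomm hquot hn xn
  have hΓm := Gamma_phiTo φs πo hφi hπs hcomm hquot hm xm
  have heq : phiTo X φs hn xn = phiTo X φs hm xm :=
    hfull (n + m) _ _ z (hΓn ▸ hzn) (hΓm ▸ hzm)
  exact ⟨heq, by rw [← hΓn, heq, hΓm]⟩
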